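/- Let v be a norm on ℝⁿ induced by an inner product, f(x) = Ax + b affine, X ⊆ ℝⁿ a symmetric C-set, and 0 ≤ ρ < 1. If v(Ax + b) ≤ ρ v(x) for all x ∈ ∂X, then the set K := {x ∈ ℝⁿ : v(x) ≤ max_{y∈∂X} v(y)} is forward invariant for x⁺ = Ax + b, i.e., f(K) ⊆ K. -/

import Mathlib

/-!
Every point is `x = t • y` with `y ∈ ∂X` and `t ≥ 0` (rescale by the gauge of `X`). Factor
`P = Bᵀ B`, so that `v = ‖g ·‖` for a linear map `g` into a Euclidean space, and put
`u = g (A y)`, `c = g b`. The hypothesis at `y` and at `-y ∈ ∂X` gives `‖±u + c‖ ≤ ρ v(y)`.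
For `t ≤ 1`, `t u + c` is a convex combination of `u + c` and `-u + c`; for `t ≥ 1` the
parallelogram law gives `‖t u + c‖ ≤ t ρ v(y) = ρ v(x)`. Hence `v(A x + b) ≤ max (v y) (v x)`,
which is at most `max_{∂X} v` when `x ∈ K`.
-/

open scoped Matrix
open Topology

theorem norm_smul_add_le_of_le_one {F : Type*} [SeminormedAddCommGroup F] [NormedSpace ℝ F]
    {u c : F} {r t : ℝ} (h₁ : ‖u + c‖ ≤ r) (h₂ : ‖-u + c‖ ≤ r) (ht₀ : 0 ≤ t) (ht₁ : t ≤ 1) :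
    ‖t • u + c‖ ≤ r := by
  have hcombo : t • u + c = ((1 + t) / 2) • (u + c) + ((1 - t) / 2) • (-u + c) := by
    module
  calc ‖t • u + c‖ ≤ ((1 + t) / 2) * ‖u + c‖ + ((1 - t) / 2) * ‖-u + c‖ := by
        rw [hcombo]
        refine (norm_add_le _ _).trans_eq ?_
        rw [norm_smul_of_nonneg (by linarith), norm_smul_of_nonneg (by linarith)]
    _ ≤ ((1 + t) / 2) * r + ((1 - t) / 2) * r := by gcongr
    _ = r := by ring

section InnerProductSpace

variable {F : Type*} [SeminormedAddCommGroup F] [InnerProductSpace ℝ F]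

theorem norm_smul_add_le_of_one_le {u c : F} {r t : ℝ} (h₁ : ‖u + c‖ ≤ r) (h₂ : ‖-u + c‖ ≤ r)
    (ht : 1 ≤ t) : ‖t • u + c‖ ≤ t * r := by
  have hr : 0 ≤ r := (norm_nonneg _).trans h₁
  -- parallelogram law: `2‖u‖² + 2‖c‖² = ‖u + c‖² + ‖-u + c‖² ≤ 2 r²`
  have hu : ‖u‖ ^ 2 ≤ r ^ 2 := by
    have := parallelogram_law_with_norm ℝ c u
    rw [add_comm c u, ← neg_add_eq_sub] at this
    nlinarith [pow_le_pow_left₀ (norm_nonneg _) h₁ 2, pow_le_pow_left₀ (norm_nonneg _) h₂ 2,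
      sq_nonneg ‖c‖]
  -- `‖t u + c‖² = t ‖u + c‖² + (t² - t) ‖u‖² - (t - 1) ‖c‖²`
  have hsq : ‖t • u + c‖ ^ 2 ≤ (t * r) ^ 2 := by
    have e₁ := norm_add_sq_real (t • u) c
    have e₂ := norm_add_sq_real u c
    rw [norm_smul_of_nonneg (by linarith), inner_smul_left] at e₁
    simp only [conj_trivial] at e₁
    nlinarith [pow_le_pow_left₀ (norm_nonneg _) h₁ 2, sq_nonneg ‖c‖,
      mul_le_mul_of_nonneg_left hu (by nlinarith : 0 ≤ t ^ 2 - t)]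
  exact (pow_le_pow_iff_left₀ (norm_nonneg _) (by positivity) two_ne_zero).1 hsq

theorem norm_smul_add_le_max_mul {u c : F} {r t : ℝ} (h₁ : ‖u + c‖ ≤ r) (h₂ : ‖-u + c‖ ≤ r)
    (ht : 0 ≤ t) : ‖t • u + c‖ ≤ max 1 t * r := by
  rcases le_total t 1 with ht₁ | ht₁
  · rw [max_eq_left ht₁, one_mul]
    exact norm_smul_add_le_of_le_one h₁ h₂ ht ht₁
  · rw [max_eq_right ht₁]
    exact norm_smul_add_le_of_one_le h₁ h₂ ht₁

end InnerProductSpace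

theorem Matrix.PosSemidef.exists_linearMap_norm_eq_sqrt {ι : Type*} [Fintype ι]
    {P : Matrix ι ι ℝ} (hP : P.PosSemidef) :
    ∃ g : (ι → ℝ) →ₗ[ℝ] EuclideanSpace ℝ ι, ∀ x, ‖g x‖ = √(x ⬝ᵥ P *ᵥ x) := by
  classical
  open scoped MatrixOrder in
  obtain ⟨B, rfl⟩ := CStarAlgebra.nonneg_iff_eq_star_mul_self.mp hP.nonneg
  refine ⟨(WithLp.linearEquiv 2 ℝ (ι → ℝ)).symm.toLinearMap ∘ₗ B.mulVecLin, fun x => ?_⟩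
  rw [norm_eq_sqrt_real_inner, EuclideanSpace.inner_eq_star_dotProduct, ← Matrix.mulVec_mulVec,
    Matrix.dotProduct_mulVec, star_eq_conjTranspose, Matrix.vecMul_conjTranspose]
  simp

section Gauge

variable {E : Type*} [AddCommGroup E] [Module ℝ E] [TopologicalSpace E] [IsTopologicalAddGroup E]
  [ContinuousSMul ℝ E] [T1Space E] {X : Set E}

theorem inv_gauge_smul_mem_frontier (hXconv : Convex ℝ X) (hX0 : X ∈ 𝓝 0)
    (hXb : Bornology.IsVonNBounded ℝ X) {x : E} (hx : x ≠ 0) :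
    (gauge X x)⁻¹ • x ∈ frontier X := by
  have hpos : 0 < gauge X x := (gauge_pos (absorbent_nhds_zero hX0) hXb).2 hx
  rw [← gauge_eq_one_iff_mem_frontier hXconv hX0, gauge_smul_of_nonneg (inv_nonneg.2 hpos.le),
    smul_eq_mul, inv_mul_cancel₀ hpos.ne']

theorem exists_mem_frontier_eq_smul [Nontrivial E] (hXconv : Convex ℝ X) (hX0 : X ∈ 𝓝 0)
    (hXb : Bornology.IsVonNBounded ℝ X) (x : E) :
    ∃ y ∈ frontier X, ∃ t : ℝ, 0 ≤ t ∧ x = t • y := by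
  by_cases hx : x = 0
  · obtain ⟨z, hz⟩ := exists_ne (0 : E)
    exact ⟨_, inv_gauge_smul_mem_frontier hXconv hX0 hXb hz, 0, le_rfl, by simp [hx]⟩
  · exact ⟨_, inv_gauge_smul_mem_frontier hXconv hX0 hXb hx, gauge X x, gauge_nonneg x,
      (smul_inv_smul₀ ((gauge_pos (absorbent_nhds_zero hX0) hXb).2 hx).ne' x).symm⟩

end Gauge

theorem neg_mem_frontier_of_forall_neg_mem {E : Type*} [TopologicalSpace E] [InvolutiveNeg E]
    [ContinuousNeg E] {X : Set E} (hX : ∀ x ∈ X, -x ∈ X) {y : E} (hy : y ∈ frontier X) :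
    -y ∈ frontier X := by
  have hXneg : Neg.neg ⁻¹' X = X := Set.ext fun z => ⟨fun h => by simpa using hX _ h, hX z⟩
  have h := (Homeomorph.neg E).preimage_frontier X
  rw [Homeomorph.coe_neg, hXneg] at h
  rw [← h, Set.mem_preimage, neg_neg]
  exact hy

theorem sublevel_forward_invariant_of_boundary_contraction_general {n : ℕ}
    (P : Matrix (Fin n) (Fin n) ℝ) (hP : P.PosDef)
    (v : (Fin n → ℝ) → ℝ) (hv : ∀ x, v x = Real.sqrt (x ⬝ᵥ P.mulVec x))
    (A : Matrix (Fin n) (Fin n) ℝ) (b : Fin n → ℝ)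
    (X : Set (Fin n → ℝ)) (hXc : IsCompact X) (hXconv : Convex ℝ X)
    (hX0 : (0 : Fin n → ℝ) ∈ interior X) (hXsym : ∀ x ∈ X, -x ∈ X)
    (ρ : ℝ) (hρ1 : ρ < 1)
    (hcontr : ∀ x ∈ frontier X, v (A.mulVec x + b) ≤ ρ * v x)
    (K : Set (Fin n → ℝ)) (hK : K = {x | v x ≤ sSup (v '' frontier X)}) :
    ∀ x ∈ K, A.mulVec x + b ∈ K := by
  subst hK
  intro x hx
  rcases subsingleton_or_nontrivial (Fin n → ℝ) with _ | _
  · rwa [Subsingleton.elim (A *ᵥ x + b) x]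
  obtain ⟨g, hg⟩ := hP.posSemidef.exists_linearMap_norm_eq_sqrt
  obtain rfl : v = fun x => ‖g x‖ := funext fun x => (hv x).trans (hg x).symm
  obtain ⟨y, hy, t, ht, rfl⟩ := exists_mem_frontier_eq_smul hXconv
    (mem_interior_iff_mem_nhds.1 hX0) ((NormedSpace.isVonNBounded_iff ℝ).2 hXc.isBounded) x
  have hyM : ‖g y‖ ≤ sSup ((fun x => ‖g x‖) '' frontier X) :=
    le_csSup ((hXc.of_isClosed_subset isClosed_frontier hXc.isClosed.frontier_subset).image
      (g.continuous_of_finiteDimensional.norm)).bddAbove ⟨y, hy, rfl⟩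
  have hpos : ‖g (A *ᵥ y) + g b‖ ≤ ρ * ‖g y‖ := by simpa using hcontr y hy
  have hneg : ‖-g (A *ᵥ y) + g b‖ ≤ ρ * ‖g y‖ := by
    simpa [Matrix.mulVec_neg] using hcontr (-y) (neg_mem_frontier_of_forall_neg_mem hXsym hy)
  calc ‖g (A *ᵥ (t • y) + b)‖ = ‖t • g (A *ᵥ y) + g b‖ := by simp [Matrix.mulVec_smul]
    _ ≤ max 1 t * (ρ * ‖g y‖) := norm_smul_add_le_max_mul hpos hneg ht
    _ ≤ max 1 t * ‖g y‖ := by gcongr; exact mul_le_of_le_one_left (norm_nonneg _) hρ1.le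
    _ = max ‖g y‖ ‖g (t • y)‖ := by simp [max_mul_of_nonneg, norm_smul, abs_of_nonneg ht]
    _ ≤ _ := max_le hyM hx

theorem sublevel_forward_invariant_of_boundary_contraction {n : ℕ}
    (P : Matrix (Fin n) (Fin n) ℝ) (hP : P.PosDef)
    (v : (Fin n → ℝ) → ℝ) (hv : ∀ x, v x = Real.sqrt (x ⬝ᵥ P.mulVec x))
    (A : Matrix (Fin n) (Fin n) ℝ) (b : Fin n → ℝ)
    (X : Set (Fin n → ℝ)) (hXc : IsCompact X) (hXconv : Convex ℝ X)
    (hX0 : (0 : Fin n → ℝ) ∈ interior X) (hXsym : ∀ x ∈ X, -x ∈ X)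
    (ρ : ℝ) (hρ0 : 0 ≤ ρ) (hρ1 : ρ < 1)
    (hcontr : ∀ x ∈ frontier X, v (A.mulVec x + b) ≤ ρ * v x)
    (K : Set (Fin n → ℝ)) (hK : K = {x | v x ≤ sSup (v '' frontier X)}) :
    ∀ x ∈ K, A.mulVec x + b ∈ K :=
  sublevel_forward_invariant_of_boundary_contraction_general P hP v hv A b X hXc hXconv hX0 hXsym ρ
    hρ1 hcontr K hK
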